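/- arXiv:math/0507421 — 4 statements merged into one kernel-verified Lean document; each statement's English description precedes it below -/
import Mathlib

section
/- The strategy that performs the tests in the order n(1), n(2), …, n(ℓ*) — i.e. in order of nondecreasing cost-to-power ratio, stopping with the perfect test — minimizes the expected cost E₀[C(s)] over all admissible strategies; the tests n(k) with k > ℓ* need never be performed. -/
/-- Expected cost of performing the listed tests in the given order, stopping as soon
as one of them returns `0` (test `ℓ` returns `0` with probability `β ℓ`, and costs `c ℓ`):
`Σ_k c (s k) * Π_{j<k} (1 - β (s j))`. -/
def seqCost {n : ℕ} (β c : Fin n → ℝ) : List (Fin n) → ℝ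
  | [] => 0
  | ℓ :: s => c ℓ + (1 - β ℓ) * seqCost β c s

namespace OptFilterAux

variable {N : ℕ} (β c : Fin N → ℝ)

def prodF (t : List (Fin N)) : ℝ := (t.map fun x => 1 - β x).prod

lemma seqCost_cons (ℓ : Fin N) (t : List (Fin N)) :
    seqCost β c (ℓ :: t) = c ℓ + (1 - β ℓ) * seqCost β c t := rfl

lemma prodF_cons (ℓ : Fin N) (t : List (Fin N)) :
    prodF β (ℓ :: t) = (1 - β ℓ) * prodF β t := by simp [prodF]

lemma prodF_nonneg (hβ1 : ∀ ℓ, β ℓ ≤ 1) (t : List (Fin N)) : 0 ≤ prodF β t := by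
  induction t with
  | nil => simp [prodF]
  | cons a t ih => rw [prodF_cons]; exact mul_nonneg (by linarith [hβ1 a]) ih

lemma lower_bound (hβ1 : ∀ ℓ, β ℓ ≤ 1) (r : ℝ) (hr : 0 ≤ r)
    (t : List (Fin N)) (ht : ∀ x ∈ t, β x * r ≤ c x) :
    r * (1 - prodF β t) ≤ seqCost β c t := by
  induction t with
  | nil => simp [prodF, seqCost]
  | cons a t ih =>
    have ha := ht a (by simp)
    have h1 : r * (1 - prodF β t) ≤ seqCost β c t := ih (fun x hx => ht x (by simp [hx]))
    have h2 : 0 ≤ 1 - β a := by linarith [hβ1 a]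
    have h3 : 0 ≤ prodF β t := prodF_nonneg β hβ1 t
    rw [seqCost_cons, prodF_cons]
    nlinarith

lemma lower_bound_mem (hβ1 : ∀ ℓ, β ℓ ≤ 1) (r : ℝ) (hr : 0 ≤ r)
    (t : List (Fin N)) (ht : ∀ x ∈ t, β x * r ≤ c x)
    (p : Fin N) (hp : p ∈ t) (hβp : β p = 1) :
    r ≤ seqCost β c t := by
  have h0 : (0 : ℝ) ∈ t.map fun x => 1 - β x := by
    have := List.mem_map_of_mem (f := fun x => 1 - β x) hp
    simpa [hβp] using this
  have hz : prodF β t = 0 := List.prod_eq_zero h0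
  have := lower_bound β c hβ1 r hr t ht
  rw [hz] at this; linarith

lemma seqCost_le_of_tail (hβ1 : ∀ ℓ, β ℓ ≤ 1) (ℓ : Fin N) {t t' : List (Fin N)}
    (h : seqCost β c t' ≤ seqCost β c t) :
    seqCost β c (ℓ :: t') ≤ seqCost β c (ℓ :: t) := by
  simp only [seqCost_cons]
  nlinarith [hβ1 ℓ]

lemma swap_head (hβ0 : ∀ x, 0 < β x) (hβ1 : ∀ x, β x ≤ 1) (ℓ m : Fin N) (t : List (Fin N))
    (h : c ℓ / β ℓ ≤ c m / β m) :
    seqCost β c (ℓ :: m :: t) ≤ seqCost β c (m :: ℓ :: t) := by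
  simp only [seqCost_cons]
  have hl := hβ0 ℓ; have hm := hβ0 m
  have h2 : c ℓ * β m ≤ c m * β ℓ := (div_le_div_iff₀ hl hm).mp h
  nlinarith

lemma bubble (hβ0 : ∀ x, 0 < β x) (hβ1 : ∀ x, β x ≤ 1) (ℓ : Fin N) (p q : List (Fin N))
    (hp : ∀ x ∈ p, c ℓ / β ℓ ≤ c x / β x) :
    seqCost β c (ℓ :: (p ++ q)) ≤ seqCost β c (p ++ ℓ :: q) := by
  induction p with
  | nil => simp
  | cons m p ih =>
    have h1 := ih (fun x hx => hp x (by simp [hx]))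
    calc seqCost β c (ℓ :: (m :: p ++ q)) = seqCost β c (ℓ :: m :: (p ++ q)) := by simp
      _ ≤ seqCost β c (m :: ℓ :: (p ++ q)) := swap_head β c hβ0 hβ1 ℓ m _ (hp m (by simp))
      _ ≤ seqCost β c (m :: (p ++ ℓ :: q)) := seqCost_le_of_tail β c hβ1 m h1
      _ = seqCost β c (m :: p ++ ℓ :: q) := by simp

end OptFilterAux

namespace OptFilterAux

lemma main_aux (L : ℕ) (β c : Fin (L+1) → ℝ) (hβ : ∀ ℓ, 0 < β ℓ ∧ β ℓ ≤ 1)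
    (hc : ∀ ℓ, 0 < c ℓ)
    (hperf : β (Fin.last L) = 1) (n : Equiv.Perm (Fin (L+1)))
    (hmono : Monotone fun k => c (n k) / β (n k))
    (K : ℕ) (hK : K ≤ L) (hn : n ⟨K, by omega⟩ = Fin.last L) :
    ∀ d k, k ≤ K → K - k = d → ∀ t : List (Fin (L+1)), t.Nodup → Fin.last L ∈ t →
      (∀ x ∈ t, k ≤ (n.symm x).val) →
      seqCost β c ((List.range' k (K+1-k)).map
          (fun j => n ⟨min j L, Nat.lt_succ_of_le (min_le_right j L)⟩)) ≤ seqCost β c t := by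
  have hβ0 : ∀ x, 0 < β x := fun x => (hβ x).1
  have hβ1 : ∀ x, β x ≤ 1 := fun x => (hβ x).2
  -- ratio comparison helper
  have hrat : ∀ (k : ℕ) (hk : k ≤ L) (x : Fin (L+1)), k ≤ (n.symm x).val →
      c (n ⟨k, by omega⟩) / β (n ⟨k, by omega⟩) ≤ c x / β x := by
    intro k hk x hx
    have h := hmono (a := ⟨k, by omega⟩) (b := n.symm x) (by simpa [Fin.le_def] using hx)
    simpa using h
  intro d
  induction d with
  | zero =>
    intro k hk hd t hnd hmem hall
    have hkK : k = K := by omega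
    subst hkK
    have hlist : (List.range' k (k+1-k)).map
        (fun j => n ⟨min j L, Nat.lt_succ_of_le (min_le_right j L)⟩) = [Fin.last L] := by
      have h1 : k + 1 - k = 1 := by omega
      rw [h1]
      simp only [List.range'_one, List.map_cons, List.map_nil]
      congr 1
      rw [← hn]
      congr 1
      exact Fin.ext (by simp; omega)
    rw [hlist]
    have hcost : seqCost β c [Fin.last L] = c (Fin.last L) := by
      simp [seqCost, hperf]
    rw [hcost]
    refine lower_bound_mem β c hβ1 _ (le_of_lt (hc _)) t ?_ (Fin.last L) hmem hperf
    intro x hx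
    have h := hrat k hK x (hall x hx)
    rw [hn] at h
    rw [hperf, div_one] at h
    have hbx := hβ0 x
    calc β x * c (Fin.last L) ≤ β x * (c x / β x) := by
          exact mul_le_mul_of_nonneg_left h (le_of_lt hbx)
      _ = c x := by field_simp
  | succ d ih =>
    intro k hk hd t hnd hmem hall
    have hkK : k < K := by omega
    set ℓ : Fin (L+1) := n ⟨min k L, Nat.lt_succ_of_le (min_le_right k L)⟩ with hℓ
    have hminkL : min k L = k := by omega
    have hℓ' : ℓ = n ⟨k, by omega⟩ := by
      rw [hℓ]; congr 1; exact Fin.ext (by simp; omega)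
    have hsplit : (List.range' k (K+1-k)).map
        (fun j => n ⟨min j L, Nat.lt_succ_of_le (min_le_right j L)⟩)
        = ℓ :: (List.range' (k+1) (K+1-(k+1))).map
          (fun j => n ⟨min j L, Nat.lt_succ_of_le (min_le_right j L)⟩) := by
      have h1 : K + 1 - k = (K + 1 - (k+1)) + 1 := by omega
      rw [h1, List.range'_succ, List.map_cons]
    rw [hsplit]
    have hℓne : ℓ ≠ Fin.last L := by
      rw [hℓ', ← hn]
      intro hcontra
      have := n.injective hcontra
      have : k = K := by simpa [Fin.ext_iff] using this
      omega
    -- ratio of ℓ bound for elements of t with symm ≥ k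
    have hratℓ : ∀ x ∈ t, k ≤ (n.symm x).val → c ℓ / β ℓ ≤ c x / β x := by
      intro x hx hkx
      rw [hℓ']
      exact hrat k (by omega) x hkx
    by_cases hmemℓ : ℓ ∈ t
    · obtain ⟨p, q, rfl⟩ := List.append_of_mem hmemℓ
      have hndpq : (p ++ q).Nodup := by
        refine List.Sublist.nodup ?_ hnd
        exact List.Sublist.append_left (List.sublist_cons_self ℓ q) p
      have hℓnp : ℓ ∉ p ∧ ℓ ∉ q := by
        rw [List.nodup_append] at hnd
        obtain ⟨h1, h2, h3⟩ := hnd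
        constructor
        · intro hcon; exact h3 ℓ hcon ℓ (by simp) rfl
        · exact (List.nodup_cons.mp h2).1
      have hmempq : Fin.last L ∈ p ++ q := by
        rcases List.mem_append.mp hmem with h | h
        · exact List.mem_append.mpr (Or.inl h)
        · rcases List.mem_cons.mp h with h | h
          · exact absurd h.symm hℓne
          · exact List.mem_append.mpr (Or.inr h)
      have hallpq : ∀ x ∈ p ++ q, k + 1 ≤ (n.symm x).val := by
        intro x hx
        have hxt : x ∈ p ++ ℓ :: q := by
          rcases List.mem_append.mp hx with h | h
          · exact List.mem_append.mpr (Or.inl h)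
          · exact List.mem_append.mpr (Or.inr (List.mem_cons_of_mem ℓ h))
        have h1 := hall x hxt
        have hxℓ : x ≠ ℓ := by
          intro hcon; subst hcon
          rcases List.mem_append.mp hx with h | h
          · exact hℓnp.1 h
          · exact hℓnp.2 h
        have : (n.symm x).val ≠ k := by
          intro hcon
          apply hxℓ
          rw [hℓ']
          have : n.symm x = ⟨k, by omega⟩ := Fin.ext hcon
          rw [← this, Equiv.apply_symm_apply]
        omega
      have hIH := ih (k+1) (by omega) (by omega) (p ++ q) hndpq hmempq hallpq
      calc seqCost β c (ℓ :: (List.range' (k+1) (K+1-(k+1))).map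
              (fun j => n ⟨min j L, Nat.lt_succ_of_le (min_le_right j L)⟩))
          ≤ seqCost β c (ℓ :: (p ++ q)) := seqCost_le_of_tail β c hβ1 ℓ hIH
        _ ≤ seqCost β c (p ++ ℓ :: q) := by
            refine bubble β c hβ0 hβ1 ℓ p q ?_
            intro x hx
            exact hratℓ x (by simp [hx]) (hall x (by simp [hx]))
    · have hall' : ∀ x ∈ t, k + 1 ≤ (n.symm x).val := by
        intro x hx
        have h1 := hall x hx
        have : (n.symm x).val ≠ k := by
          intro hcon
          apply hmemℓ
          have : n.symm x = ⟨k, by omega⟩ := Fin.ext hcon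
          have hx2 : x = ℓ := by
            rw [hℓ', ← this, Equiv.apply_symm_apply]
          rw [← hx2]; exact hx
        omega
      have hIH := ih (k+1) (by omega) (by omega) t hnd hmem hall'
      have hSt : c ℓ / β ℓ ≤ seqCost β c t := by
        refine lower_bound_mem β c hβ1 _ (div_nonneg (le_of_lt (hc ℓ)) (le_of_lt (hβ0 ℓ))) t
          ?_ (Fin.last L) hmem hperf
        intro x hx
        have h := hratℓ x hx (hall x hx)
        have hbx := hβ0 x
        calc β x * (c ℓ / β ℓ) ≤ β x * (c x / β x) :=
              mul_le_mul_of_nonneg_left h (le_of_lt hbx)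
          _ = c x := by field_simp
      have hcℓ : c ℓ ≤ β ℓ * seqCost β c t := by
        have := (div_le_iff₀ (hβ0 ℓ)).mp hSt
        linarith [this]
      have step : seqCost β c (ℓ :: (List.range' (k+1) (K+1-(k+1))).map
              (fun j => n ⟨min j L, Nat.lt_succ_of_le (min_le_right j L)⟩))
          ≤ seqCost β c (ℓ :: t) := seqCost_le_of_tail β c hβ1 ℓ hIH
      rw [seqCost_cons] at step ⊢
      nlinarith [hβ1 ℓ, hβ0 ℓ]

end OptFilterAux


/-- **Optimal single-pattern filtering strategy.**  Tests `X_0, …, X_L` are mutually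
independent under the background measure, with powers `β ℓ ∈ (0,1]` and costs `c ℓ > 0`;
the last test `Fin.last L` is perfect (`β = 1`, cost `c*`).  An admissible strategy is an
injective list of tests ending with the perfect test, performed in order until the first
null answer.  If `n` orders the tests by nondecreasing cost-to-power ratio and
`n ℓstar = Fin.last L`, then the strategy `(n 0, n 1, …, n ℓstar)` — which never performs
the tests `n k` for `k > ℓstar` — minimizes the expected cost. -/
theorem optimal_single_pattern_strategy (L : ℕ) (β c : Fin (L + 1) → ℝ)
    (hβ : ∀ ℓ, 0 < β ℓ ∧ β ℓ ≤ 1) (hc : ∀ ℓ, 0 < c ℓ)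
    (hperf : β (Fin.last L) = 1)
    (n : Equiv.Perm (Fin (L + 1)))
    (hmono : Monotone fun k => c (n k) / β (n k))
    (ℓstar : Fin (L + 1)) (hℓstar : n ℓstar = Fin.last L)
    (s : List (Fin (L + 1))) (hnd : s.Nodup)
    (hlast : s.getLast? = some (Fin.last L)) :
    seqCost β c
        (List.ofFn fun k : Fin (ℓstar.val + 1) => n (Fin.castLE (Nat.succ_le_of_lt ℓstar.isLt) k))
      ≤ seqCost β c s := by
  have hK : ℓstar.val ≤ L := Nat.lt_succ_iff.mp ℓstar.isLt
  have hn : n ⟨ℓstar.val, by omega⟩ = Fin.last L := by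
    rw [show (⟨ℓstar.val, by omega⟩ : Fin (L+1)) = ℓstar from Fin.ext rfl]
    exact hℓstar
  have hmem : Fin.last L ∈ s := by
    obtain ⟨l', rfl⟩ := List.getLast?_eq_some_iff.mp hlast
    simp
  have key := OptFilterAux.main_aux L β c hβ hc hperf n hmono ℓstar.val hK hn
    ℓstar.val 0 (by omega) (by omega) s hnd hmem (fun x _ => Nat.zero_le _)
  have hlist : (List.ofFn fun k : Fin (ℓstar.val + 1) =>
        n (Fin.castLE (Nat.succ_le_of_lt ℓstar.isLt) k))
      = (List.range' 0 (ℓstar.val+1-0)).map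
          (fun j => n ⟨min j L, Nat.lt_succ_of_le (min_le_right j L)⟩) := by
    apply List.ext_getElem
    · simp
    · intro i h1 h2
      simp only [List.getElem_ofFn, List.getElem_map, List.getElem_range']
      congr 1
      apply Fin.ext
      simp at h1 ⊢
      omega
  rw [hlist]
  exact key
end

section
/- There exists an expected-cost-minimizing strategy whose first performed test is X_{n(1)}, the test with the smallest cost-to-power ratio c_{n(1)}/β_{n(1)}. -/
private lemma prod_mem_Icc {N : ℕ} (β : Fin N → ℝ) (hβ : ∀ ℓ, 0 < β ℓ ∧ β ℓ ≤ 1)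
    (l : List (Fin N)) :
    0 ≤ (l.map fun ℓ => 1 - β ℓ).prod ∧ (l.map fun ℓ => 1 - β ℓ).prod ≤ 1 := by
  induction l with
  | nil => simp
  | cons x l ih =>
    simp only [List.map_cons, List.prod_cons]
    refine ⟨mul_nonneg (by linarith [(hβ x).2]) ih.1, ?_⟩
    calc (1 - β x) * (l.map fun ℓ => 1 - β ℓ).prod ≤ 1 * 1 :=
          mul_le_mul (by linarith [(hβ x).1]) ih.2 ih.1 (by norm_num)
    _ = 1 := by ring

private lemma seqCost_append {N : ℕ} (β c : Fin N → ℝ) (a b : List (Fin N)) :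
    seqCost β c (a ++ b)
      = seqCost β c a + (a.map fun ℓ => 1 - β ℓ).prod * seqCost β c b := by
  induction a with
  | nil => simp [seqCost]
  | cons x a ih => simp [seqCost, ih]; ring

/-- cost of any list is at least `(1 - P) * r` where `r` is the minimal ratio. -/
private lemma cost_ge_defect {N : ℕ} (β c : Fin N → ℝ) (r : ℝ)
    (hβ : ∀ ℓ, 0 < β ℓ ∧ β ℓ ≤ 1) (hr0 : 0 ≤ r) (hr : ∀ ℓ, β ℓ * r ≤ c ℓ)
    (l : List (Fin N)) :
    (1 - (l.map fun ℓ => 1 - β ℓ).prod) * r ≤ seqCost β c l := by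
  induction l with
  | nil => simp [seqCost]
  | cons x l ih =>
    simp only [List.map_cons, List.prod_cons, seqCost]
    have h1 : 0 ≤ 1 - β x := by linarith [(hβ x).2]
    have h2 := (prod_mem_Icc β hβ l).2
    have h3 := hr x
    nlinarith [mul_le_mul_of_nonneg_left ih h1]

/-- cost of any admissible list (ending in the perfect test) is at least `r`. -/
private lemma cost_ge_r (L : ℕ) (β c : Fin (L + 1) → ℝ) (r : ℝ)
    (hβ : ∀ ℓ, 0 < β ℓ ∧ β ℓ ≤ 1) (hperf : β (Fin.last L) = 1)
    (hr0 : 0 ≤ r) (hr : ∀ ℓ, β ℓ * r ≤ c ℓ) :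
    ∀ l : List (Fin (L + 1)), l.getLast? = some (Fin.last L) → r ≤ seqCost β c l := by
  intro l
  induction l with
  | nil => intro h; simp at h
  | cons x l ih =>
    intro h
    match l, h with
    | [], h =>
      simp only [List.getLast?_singleton, Option.some.injEq] at h
      subst h
      have := hr (Fin.last L)
      simp only [seqCost, hperf] at *
      linarith
    | y :: l, h =>
      rw [List.getLast?_cons_cons] at h
      have hrest := ih h
      have h1 : 0 ≤ 1 - β x := by linarith [(hβ x).2]
      have h3 := hr x
      simp only [seqCost] at *
      nlinarith

/-- **There is an optimal single-pattern strategy starting with the test of smallest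
cost-to-power ratio.**  Tests `X_0, …, X_L` are mutually independent under the background
measure, with powers `β ℓ ∈ (0,1]` and costs `c ℓ > 0`; the last test `Fin.last L` is
perfect (`β = 1`, cost `c*`).  An admissible strategy is an injective list of tests ending
with the perfect test, performed in order until the first null answer.  If `n` orders the
tests by nondecreasing cost-to-power ratio, then there exists an expected-cost-minimizing
admissible strategy whose first performed test is `X_{n 0}`. -/
theorem exists_optimal_strategy_starting_with_best_ratio (L : ℕ) (β c : Fin (L + 1) → ℝ)
    (hβ : ∀ ℓ, 0 < β ℓ ∧ β ℓ ≤ 1) (hc : ∀ ℓ, 0 < c ℓ)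
    (hperf : β (Fin.last L) = 1)
    (n : Equiv.Perm (Fin (L + 1)))
    (hmono : Monotone fun k => c (n k) / β (n k)) :
    ∃ s : List (Fin (L + 1)), s.Nodup ∧ s.getLast? = some (Fin.last L) ∧
      s.head? = some (n 0) ∧
      ∀ s' : List (Fin (L + 1)), s'.Nodup → s'.getLast? = some (Fin.last L) →
        seqCost β c s ≤ seqCost β c s' := by
  set r : ℝ := c (n 0) / β (n 0) with hrdef
  have hβ0 := fun ℓ => (hβ ℓ).1
  have hr0 : 0 ≤ r := div_nonneg (hc _).le (hβ0 _).le
  have hrmin : ∀ ℓ, r ≤ c ℓ / β ℓ := by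
    intro ℓ
    have : ℓ = n (n.symm ℓ) := (n.apply_symm_apply ℓ).symm
    rw [this]
    exact hmono (Fin.zero_le _)
  have hr : ∀ ℓ, β ℓ * r ≤ c ℓ := by
    intro ℓ
    have := (le_div_iff₀ (hβ0 ℓ)).mp (hrmin ℓ)
    linarith
  have hcgr := cost_ge_r L β c r hβ hperf hr0 hr
  -- candidate set
  set A : Set (List (Fin (L + 1))) :=
    {s | s.Nodup ∧ s.getLast? = some (Fin.last L) ∧ s.head? = some (n 0)} with hA
  have hAfin : A.Finite := by
    apply (List.finite_length_le (Fin (L + 1)) (L + 1)).subset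
    intro l hl
    simpa [Fintype.card_fin] using hl.1.length_le_card
  have hAne : A.Nonempty := by
    by_cases h0 : n 0 = Fin.last L
    · exact ⟨[Fin.last L], by simp [hA, h0]⟩
    · exact ⟨[n 0, Fin.last L], by simp [hA, h0]⟩
  obtain ⟨s, hsA, hsmin⟩ := Set.exists_min_image A (seqCost β c) hAfin hAne
  refine ⟨s, hsA.1, hsA.2.1, hsA.2.2, ?_⟩
  intro s' hnd hlast
  -- it suffices to find t ∈ A with cost t ≤ cost s'
  suffices h : ∃ t ∈ A, seqCost β c t ≤ seqCost β c s' by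
    obtain ⟨t, htA, htle⟩ := h
    exact (hsmin t htA).trans htle
  by_cases h0 : n 0 = Fin.last L
  · refine ⟨[Fin.last L], by simp [hA, h0], ?_⟩
    have : seqCost β c [Fin.last L] = c (Fin.last L) := by simp [seqCost]
    rw [this]
    have : r = c (Fin.last L) := by rw [hrdef, h0, hperf, div_one]
    rw [← this]
    exact hcgr s' hlast
  · by_cases h1 : n 0 ∈ s'
    · obtain ⟨a, b, rfl⟩ := List.append_of_mem h1
      have hbne : b ≠ [] := by
        rintro rfl
        rw [show a ++ [n 0] = a ++ [n 0] from rfl, List.getLast?_concat] at hlast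
        exact h0 (Option.some.injEq _ _ ▸ hlast)
      refine ⟨n 0 :: (a ++ b), ⟨?_, ?_, rfl⟩, ?_⟩
      · exact List.nodup_middle.mp hnd
      · have h2 : (a ++ b) ≠ [] := fun h => hbne (List.append_eq_nil_iff.mp h).2
        rw [show n 0 :: (a ++ b) = [n 0] ++ (a ++ b) from rfl,
          List.getLast?_append_of_ne_nil _ h2, List.getLast?_append_of_ne_nil _ hbne]
        rw [List.getLast?_append_of_ne_nil _ (by simp : n 0 :: b ≠ [])] at hlast
        rwa [show n 0 :: b = [n 0] ++ b from rfl,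
          List.getLast?_append_of_ne_nil _ hbne] at hlast
      · have e1 : seqCost β c (a ++ n 0 :: b)
            = seqCost β c a + (a.map fun ℓ => 1 - β ℓ).prod
              * (c (n 0) + (1 - β (n 0)) * seqCost β c b) := by
          rw [seqCost_append]; rfl
        have e2 : seqCost β c (n 0 :: (a ++ b))
            = c (n 0) + (1 - β (n 0))
              * (seqCost β c a + (a.map fun ℓ => 1 - β ℓ).prod * seqCost β c b) := by
          show c (n 0) + (1 - β (n 0)) * seqCost β c (a ++ b) = _
          rw [seqCost_append]
        rw [e1, e2]
        have hd := cost_ge_defect β c r hβ hr0 hr a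
        have hP := prod_mem_Icc β hβ a
        have hc0 : c (n 0) = β (n 0) * r := by
          rw [hrdef]; field_simp [(hβ0 (n 0)).ne']
        have hb0 := (hβ0 (n 0))
        nlinarith [mul_le_mul_of_nonneg_left hd hb0.le]
    · refine ⟨n 0 :: s', ⟨List.nodup_cons.mpr ⟨h1, hnd⟩, ?_, rfl⟩, ?_⟩
      · have hne : s' ≠ [] := by rintro rfl; simp at hlast
        rw [show n 0 :: s' = [n 0] ++ s' from rfl, List.getLast?_append_of_ne_nil _ hne]
        exact hlast
      · have hX := hcgr s' hlast
        have hc0 : c (n 0) = β (n 0) * r := by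
          rw [hrdef]; field_simp [(hβ0 (n 0)).ne']
        have hb0 := hβ0 (n 0)
        show c (n 0) + (1 - β (n 0)) * seqCost β c s' ≤ seqCost β c s'
        nlinarith
end

section
/- For every strategy T satisfying the no-error constraint, E₀[C(T)] = Σ_{Z ∈ 𝒵(𝒜̄)} P₀(𝒳₀(T) = Z) · Σ_{A ∈ Z} c(A)/β(A), where 𝒵(𝒜̄) is the set of coverings, i.e. subsets Z ⊆ 𝒜̄ with ∪_{A ∈ Z} A = 𝒴. In particular, E₀[C(T)] is a convex combination of the quantities Σ_{A ∈ Z} c(A)/β(A) over coverings Z. -/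
open Finset

/-- A tree-structured attribute hierarchy on a finite pattern set `Y`: a finite family of
nonempty attributes containing `𝒴` itself, any two of which are disjoint or nested, and
in which every singleton is the intersection of the attributes containing it. -/
structure Hierarchy (Y : Type*) [Fintype Y] [DecidableEq Y] where
  attrs : Finset (Finset Y)
  univ_mem : Finset.univ ∈ attrs
  nonempty_of_mem : ∀ A ∈ attrs, A.Nonempty
  nested : ∀ A ∈ attrs, ∀ B ∈ attrs, A ∩ B = ∅ ∨ A ⊆ B ∨ B ⊆ A
  singleton_inf : ∀ y : Y, (attrs.filter fun A => y ∈ A).inf id = {y}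

/-- A testing strategy: a finite binary tree whose internal nodes are labeled by tests;
at each node the test is performed, the right subtree being followed on a positive
outcome and the left subtree on a null outcome. -/
inductive Strategy (ι : Type*) where
  | leaf : Strategy ι
  | node : ι → Strategy ι → Strategy ι → Strategy ι

namespace Strategy

variable {ι : Type*} [DecidableEq ι]

/-- The set of tests performed on outcome `ω` (`ω i = false` means test `i` returned `0`). -/
def performed : Strategy ι → (ι → Bool) → Finset ι
  | leaf, _ => ∅
  | node i t0 t1, ω => insert i (if ω i then performed t1 ω else performed t0 ω)

/-- The zero set: performed tests that returned `0`. -/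
def zeroSet : Strategy ι → (ι → Bool) → Finset ι
  | leaf, _ => ∅
  | node i t0 t1, ω => if ω i then zeroSet t1 ω else insert i (zeroSet t0 ω)

/-- No test occurs twice along a root-to-leaf branch (relative to tests already used). -/
def noRepeatFrom : Strategy ι → Finset ι → Prop
  | leaf, _ => True
  | node i t0 t1, used =>
      i ∉ used ∧ noRepeatFrom t0 (insert i used) ∧ noRepeatFrom t1 (insert i used)

/-- No test occurs twice along any root-to-leaf branch. -/
def noRepeat (T : Strategy ι) : Prop := T.noRepeatFrom ∅

/-- All node labels of the strategy belong to `S`. -/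
def labelsIn : Strategy ι → Finset ι → Prop
  | leaf, _ => True
  | node i t0 t1, S => i ∈ S ∧ labelsIn t0 S ∧ labelsIn t1 S

end Strategy

/-- Probability of the elementary outcome `ω` when the tests are mutually independent
and test `i` returns `0` with probability `pw i` (its power). -/
def pOmega {ι : Type*} [Fintype ι] (pw : ι → ℝ) (ω : ι → Bool) : ℝ :=
  ∏ i, if ω i then 1 - pw i else pw i

/-- Probability of an event (a set of outcomes) under the background product measure. -/
def probOf {ι : Type*} [Fintype ι] [DecidableEq ι] (pw : ι → ℝ)
    (E : Finset (ι → Bool)) : ℝ :=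
  ∑ ω ∈ E, pOmega pw ω

/-- Expected testing cost of a strategy: `Σ_i c i · P₀(test i is performed)`. -/
def testCost {ι : Type*} [Fintype ι] [DecidableEq ι] (pw cst : ι → ℝ)
    (T : Strategy ι) : ℝ :=
  ∑ i, cst i * probOf pw (Finset.univ.filter fun ω => i ∈ T.performed ω)

section Augmented

variable {Y : Type*} [Fintype Y] [DecidableEq Y]

/-- Index set of the augmented hierarchy: the original attributes together with, for
each pattern `y`, an extra copy of `{y}` carrying a perfect test. -/
def AugIdx (H : Hierarchy Y) : Type _ := {A : Finset Y // A ∈ H.attrs} ⊕ Y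

instance (H : Hierarchy Y) : Fintype (AugIdx H) :=
  inferInstanceAs (Fintype ({A : Finset Y // A ∈ H.attrs} ⊕ Y))

instance (H : Hierarchy Y) : DecidableEq (AugIdx H) :=
  inferInstanceAs (DecidableEq ({A : Finset Y // A ∈ H.attrs} ⊕ Y))

/-- The set of patterns covered by an augmented attribute. -/
def augSet (H : Hierarchy Y) : AugIdx H → Finset Y :=
  Sum.elim (fun A => A.val) (fun y => {y})

/-- Powers in the augmented hierarchy: the original power `β A` on original attributes,
and power `1` on the perfect singleton tests. -/
def augPow (H : Hierarchy Y) (β : Finset Y → ℝ) : AugIdx H → ℝ :=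
  Sum.elim (fun A => β A.val) (fun _ => 1)

/-- Costs in the augmented hierarchy: the original cost `c A` on original attributes,
and cost `c*` on the perfect singleton tests. -/
def augCost (H : Hierarchy Y) (c : Finset Y → ℝ) (cstar : ℝ) : AugIdx H → ℝ :=
  Sum.elim (fun A => c A.val) (fun _ => cstar)

/-- A set of augmented attributes is a covering if its members cover all of `𝒴`. -/
def IsCovering (H : Hierarchy Y) (Z : Finset (AugIdx H)) : Prop :=
  Z.sup (augSet H) = Finset.univ

instance (H : Hierarchy Y) (Z : Finset (AugIdx H)) : Decidable (IsCovering H Z) :=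
  inferInstanceAs (Decidable (_ = _))

/-- The no-error constraint: almost surely under the background measure, the zero set of
the strategy is a covering. -/
def NoError (H : Hierarchy Y) (β : Finset Y → ℝ) (T : Strategy (AugIdx H)) : Prop :=
  probOf (augPow H β)
    (Finset.univ.filter fun ω => ¬ IsCovering H (T.zeroSet ω)) = 0

end Augmented


section Aux

open Function

variable {ι : Type*} [DecidableEq ι]

lemma Strategy.zeroSet_eq (T : Strategy ι) (ω : ι → Bool) :
    T.zeroSet ω = (T.performed ω).filter (fun i => ω i = false) := by
  induction T with
  | leaf => simp [Strategy.zeroSet, Strategy.performed]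
  | node j t0 t1 ih0 ih1 =>
    simp only [Strategy.zeroSet, Strategy.performed]
    by_cases h : ω j = true
    · simp [h, ih1, Finset.filter_insert]
    · simp only [Bool.not_eq_true] at h
      simp [h, ih0, Finset.filter_insert]

lemma Strategy.mem_performed_update (T : Strategy ι) (ω : ι → Bool) (i : ι) (b : Bool) :
    i ∈ T.performed (Function.update ω i b) ↔ i ∈ T.performed ω := by
  induction T with
  | leaf => simp [Strategy.performed]
  | node j t0 t1 ih0 ih1 =>
    by_cases hj : j = i
    · subst hj; simp [Strategy.performed]
    · simp only [Strategy.performed, Function.update_of_ne hj, Finset.mem_insert]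
      by_cases h : ω j = true
      · simp [h, ih1]
      · simp only [Bool.not_eq_true] at h
        simp [h, ih0]

variable [Fintype ι]

lemma pOmega_nonneg (pw : ι → ℝ) (h : ∀ i, 0 < pw i ∧ pw i ≤ 1) (ω : ι → Bool) :
    0 ≤ pOmega pw ω := by
  refine Finset.prod_nonneg fun i _ => ?_
  by_cases hb : ω i = true
  · simp [pOmega, hb]; linarith [(h i).2]
  · simp only [Bool.not_eq_true] at hb
    simp [pOmega, hb]; linarith [(h i).1]

lemma pOmega_total (pw : ι → ℝ) : ∑ ω : ι → Bool, pOmega pw ω = 1 := by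
  have h := Finset.sum_prod_piFinset (ι := ι) (Finset.univ : Finset Bool)
    (fun i b => if b = true then 1 - pw i else pw i)
  rw [Fintype.piFinset_univ] at h
  unfold pOmega
  rw [h]
  refine Finset.prod_eq_one fun i _ => ?_
  rw [Fintype.sum_bool]
  norm_num

lemma pOmega_update_key (pw : ι → ℝ) (ω : ι → Bool) (i : ι) :
    pw i * pOmega pw (Function.update ω i true)
      = (1 - pw i) * pOmega pw (Function.update ω i false) := by
  unfold pOmega
  rw [← Finset.mul_prod_erase _ _ (Finset.mem_univ i),
      ← Finset.mul_prod_erase _ _ (Finset.mem_univ i)]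
  have hprod : ∏ j ∈ Finset.univ.erase i,
        (if Function.update ω i true j then 1 - pw j else pw j)
      = ∏ j ∈ Finset.univ.erase i,
        (if Function.update ω i false j then 1 - pw j else pw j) := by
    refine Finset.prod_congr rfl fun j hj => ?_
    have hji : j ≠ i := (Finset.mem_erase.1 hj).1
    rw [Function.update_of_ne hji, Function.update_of_ne hji]
  rw [hprod, Function.update_self, Function.update_self,
    if_pos rfl, if_neg Bool.false_ne_true]
  ring

/-- If the event `E` is invariant under changing coordinate `i`, then the probability of
`E ∩ {ω i = false}` equals `pw i` times the probability of `E`. -/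
lemma sum_filter_false_eq (pw : ι → ℝ) (i : ι) (E : Finset (ι → Bool))
    (hE : ∀ ω ∈ E, ∀ b, Function.update ω i b ∈ E) :
    ∑ ω ∈ E.filter (fun ω => ω i = false), pOmega pw ω = pw i * ∑ ω ∈ E, pOmega pw ω := by
  have hsplit := Finset.sum_filter_add_sum_filter_not E (fun ω => ω i = false) (pOmega pw)
  have hkey : pw i * ∑ ω ∈ E.filter (fun ω => ¬ ω i = false), pOmega pw ω
      = (1 - pw i) * ∑ ω ∈ E.filter (fun ω => ω i = false), pOmega pw ω := by
    rw [Finset.mul_sum, Finset.mul_sum]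
    refine Finset.sum_nbij' (fun ω => Function.update ω i false)
      (fun ω => Function.update ω i true) ?_ ?_ ?_ ?_ ?_
    · intro ω hω
      rw [Finset.mem_filter] at hω ⊢
      exact ⟨hE ω hω.1 false, by simp⟩
    · intro ω hω
      rw [Finset.mem_filter] at hω ⊢
      exact ⟨hE ω hω.1 true, by simp⟩
    · intro ω hω
      rw [Finset.mem_filter] at hω
      have : ω i = true := by
        cases h : ω i with
        | false => exact absurd h hω.2
        | true => rfl
      funext j
      by_cases hji : j = i
      · subst hji; simp [this]
      · simp [Function.update_of_ne hji]
    · intro ω hω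
      rw [Finset.mem_filter] at hω
      funext j
      by_cases hji : j = i
      · subst hji; simp [hω.2]
      · simp [Function.update_of_ne hji]
    · intro ω hω
      rw [Finset.mem_filter] at hω
      have hωi : ω i = true := by
        cases h : ω i with
        | false => exact absurd h hω.2
        | true => rfl
      have hself : Function.update ω i true = ω := by
        rw [← hωi]; exact Function.update_eq_self i ω
      calc pw i * pOmega pw ω = pw i * pOmega pw (Function.update ω i true) := by rw [hself]
        _ = (1 - pw i) * pOmega pw (Function.update ω i false) := pOmega_update_key pw ω i
  rw [← hsplit, mul_add, hkey]
  ring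

end Aux

/-- **Cost reformulation (Lemma 1).**  For any no-error strategy `T` on the augmented
hierarchy (original tests of cost `c A > 0` and power `β A ∈ (0,1]`, plus perfect
singleton tests of cost `c* > 0` and power `1`, all mutually independent under the
background measure), the expected cost satisfies
`E₀[C(T)] = Σ_{Z covering} P₀(𝒳₀(T) = Z) · Σ_{A ∈ Z} c(A)/β(A)`;
in particular, since the weights `P₀(𝒳₀(T) = Z)` are nonnegative and sum to one,
`E₀[C(T)]` is a convex combination of the quantities `Σ_{A ∈ Z} c(A)/β(A)` over
coverings `Z`. -/
theorem cost_reformulation {Y : Type*} [Fintype Y] [DecidableEq Y] (H : Hierarchy Y)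
    (β c : Finset Y → ℝ)
    (hβ : ∀ A ∈ H.attrs, 0 < β A ∧ β A ≤ 1) (hc : ∀ A ∈ H.attrs, 0 < c A)
    (cstar : ℝ) (hcstar : 0 < cstar)
    (T : Strategy (AugIdx H)) (hrep : T.noRepeat) (hne : NoError H β T) :
    testCost (augPow H β) (augCost H c cstar) T
        = ∑ Z ∈ Finset.univ.filter (fun Z : Finset (AugIdx H) => IsCovering H Z),
            probOf (augPow H β) (Finset.univ.filter fun ω => T.zeroSet ω = Z)
              * ∑ i ∈ Z, augCost H c cstar i / augPow H β i
      ∧ (∀ Z : Finset (AugIdx H),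
          0 ≤ probOf (augPow H β) (Finset.univ.filter fun ω => T.zeroSet ω = Z))
      ∧ ∑ Z ∈ Finset.univ.filter (fun Z : Finset (AugIdx H) => IsCovering H Z),
            probOf (augPow H β) (Finset.univ.filter fun ω => T.zeroSet ω = Z) = 1 := by
  classical
  set pw := augPow H β with hpw
  set cc := augCost H c cstar with hcc
  have hpw01 : ∀ i, 0 < pw i ∧ pw i ≤ 1 := by
    intro i
    cases i with
    | inl A => exact hβ A.1 A.2
    | inr y => exact ⟨one_pos, le_refl 1⟩
  have hnn : ∀ ω, 0 ≤ pOmega pw ω := pOmega_nonneg pw hpw01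
  -- per-test identity: P(i ∈ zero set) = pw i * P(i performed)
  have hstep : ∀ i : AugIdx H,
      probOf pw (Finset.univ.filter fun ω => i ∈ T.zeroSet ω)
        = pw i * probOf pw (Finset.univ.filter fun ω => i ∈ T.performed ω) := by
    intro i
    have hEinv : ∀ ω ∈ (Finset.univ.filter fun ω => i ∈ T.performed ω), ∀ b : Bool,
        Function.update ω i b ∈ (Finset.univ.filter fun ω => i ∈ T.performed ω) := by
      intro ω hω b
      rw [Finset.mem_filter] at hω ⊢
      exact ⟨Finset.mem_univ _, (T.mem_performed_update ω i b).2 hω.2⟩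
    have hset : (Finset.univ.filter fun ω => i ∈ T.zeroSet ω)
        = (Finset.univ.filter fun ω => i ∈ T.performed ω).filter (fun ω => ω i = false) := by
      ext ω
      simp [Strategy.zeroSet_eq, Finset.mem_filter, and_assoc]
    rw [hset]
    exact sum_filter_false_eq pw i _ hEinv
  -- expected cost as a sum over outcomes
  have hcost : testCost pw cc T = ∑ ω : (AugIdx H) → Bool,
      pOmega pw ω * ∑ i ∈ T.zeroSet ω, cc i / pw i := by
    unfold testCost
    calc ∑ i, cc i * probOf pw (Finset.univ.filter fun ω => i ∈ T.performed ω)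
        = ∑ i, cc i / pw i * probOf pw (Finset.univ.filter fun ω => i ∈ T.zeroSet ω) := by
          refine Finset.sum_congr rfl fun i _ => ?_
          have hp : pw i ≠ 0 := (hpw01 i).1.ne'
          rw [hstep i]
          field_simp
      _ = ∑ i, ∑ ω : (AugIdx H) → Bool,
            (if i ∈ T.zeroSet ω then cc i / pw i * pOmega pw ω else 0) := by
          refine Finset.sum_congr rfl fun i _ => ?_
          rw [probOf, Finset.mul_sum, Finset.sum_filter]
      _ = ∑ ω : (AugIdx H) → Bool, ∑ i,
            (if i ∈ T.zeroSet ω then cc i / pw i * pOmega pw ω else 0) := Finset.sum_comm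
      _ = ∑ ω : (AugIdx H) → Bool, pOmega pw ω * ∑ i ∈ T.zeroSet ω, cc i / pw i := by
          refine Finset.sum_congr rfl fun ω _ => ?_
          rw [Finset.sum_ite_mem, Finset.univ_inter, Finset.mul_sum]
          exact Finset.sum_congr rfl fun i _ => mul_comm _ _
  -- grouping outcomes by the value of the zero set
  have hfiber : ∀ g : Finset (AugIdx H) → ℝ,
      ∑ ω : (AugIdx H) → Bool, pOmega pw ω * g (T.zeroSet ω)
        = ∑ Z : Finset (AugIdx H),
            probOf pw (Finset.univ.filter fun ω => T.zeroSet ω = Z) * g Z := by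
    intro g
    rw [← Finset.sum_fiberwise Finset.univ (fun ω => T.zeroSet ω)
      (fun ω => pOmega pw ω * g (T.zeroSet ω))]
    refine Finset.sum_congr rfl fun Z _ => ?_
    rw [probOf, Finset.sum_mul]
    refine Finset.sum_congr rfl fun ω hω => ?_
    rw [Finset.mem_filter] at hω
    rw [hω.2]
  -- non-covering zero sets have probability zero
  have hzero : ∀ Z : Finset (AugIdx H), ¬ IsCovering H Z →
      probOf pw (Finset.univ.filter fun ω => T.zeroSet ω = Z) = 0 := by
    intro Z hZ
    have hbad : ∀ ω ∈ (Finset.univ.filter fun ω => ¬ IsCovering H (T.zeroSet ω)),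
        pOmega pw ω = 0 := by
      have h := hne
      unfold NoError probOf at h
      exact (Finset.sum_eq_zero_iff_of_nonneg (fun ω _ => hnn ω)).1 h
    rw [probOf]
    refine Finset.sum_eq_zero fun ω hω => ?_
    rw [Finset.mem_filter] at hω
    exact hbad ω (Finset.mem_filter.2 ⟨Finset.mem_univ _, by rw [hω.2]; exact hZ⟩)
  -- restriction of the sum to coverings
  have hsplitcov : ∀ g : Finset (AugIdx H) → ℝ,
      (∑ Z : Finset (AugIdx H),
          probOf pw (Finset.univ.filter fun ω => T.zeroSet ω = Z) * g Z)
        = ∑ Z ∈ Finset.univ.filter (fun Z : Finset (AugIdx H) => IsCovering H Z),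
            probOf pw (Finset.univ.filter fun ω => T.zeroSet ω = Z) * g Z := by
    intro g
    rw [← Finset.sum_filter_add_sum_filter_not Finset.univ
      (fun Z : Finset (AugIdx H) => IsCovering H Z)
      (fun Z => probOf pw (Finset.univ.filter fun ω => T.zeroSet ω = Z) * g Z)]
    have h0 : ∑ Z ∈ Finset.univ.filter (fun Z : Finset (AugIdx H) => ¬ IsCovering H Z),
        probOf pw (Finset.univ.filter fun ω => T.zeroSet ω = Z) * g Z = 0 :=
      Finset.sum_eq_zero fun Z hZ => by
        rw [hzero Z (Finset.mem_filter.1 hZ).2, zero_mul]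
    rw [h0, add_zero]
  refine ⟨?_, ?_, ?_⟩
  · rw [hcost]
    exact (hfiber (fun Z => ∑ i ∈ Z, cc i / pw i)).trans
      (hsplitcov (fun Z => ∑ i ∈ Z, cc i / pw i))
  · intro Z
    exact Finset.sum_nonneg fun ω _ => hnn ω
  · have h1 := (hsplitcov (fun _ => 1)).symm.trans (hfiber (fun _ => 1)).symm
    simp only [mul_one] at h1
    rw [h1]
    exact pOmega_total pw
end

section
/- Let A₁ = 𝒴 be the coarsest attribute. If c(A₁)/β(A₁) ≤ inf_{Z ∈ 𝒵(𝒜̄)} Σ_{A ∈ Z} c(A)/β(A), the infimum being over all coverings Z of the augmented hierarchy (subsets Z ⊆ 𝒜̄ with ∪_{A∈Z} A = 𝒴), then the (CF) property holds: there exists a strategy of minimal expected cost whose first performed test is X_{A₁}. -/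
open Finset

namespace CFaux

set_option linter.unusedSectionVars false

variable {ι : Type*} [Fintype ι] [DecidableEq ι] {pw : ι → ℝ}

lemma pOmega_nonneg (h0 : ∀ i, 0 ≤ pw i) (h1 : ∀ i, pw i ≤ 1) (ω : ι → Bool) :
    0 ≤ pOmega pw ω := by
  refine Finset.prod_nonneg fun i _ => ?_
  by_cases h : ω i <;> simp [h] <;> [linarith [h1 i]; exact h0 i]

lemma probOf_nonneg (h0 : ∀ i, 0 ≤ pw i) (h1 : ∀ i, pw i ≤ 1) (E : Finset (ι → Bool)) :
    0 ≤ probOf pw E :=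
  Finset.sum_nonneg fun ω _ => pOmega_nonneg h0 h1 ω

lemma probOf_univ : probOf pw Finset.univ = 1 := by
  have h : (1:ℝ) = ∏ i : ι, ((1 - pw i) + pw i) := by simp
  rw [h, Finset.prod_add]
  unfold probOf pOmega
  refine Finset.sum_nbij' (i := fun ω => Finset.univ.filter fun i => ω i)
    (j := fun t => fun i => decide (i ∈ t)) ?_ ?_ ?_ ?_ ?_
  · intro ω _; exact Finset.mem_powerset.2 (Finset.subset_univ _)
  · intro t _; exact Finset.mem_univ _
  · intro ω _; ext i; simp
  · intro t _; ext i; simp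
  · intro ω _
    rw [Finset.prod_ite (fun i => 1 - pw i) (fun i => pw i), Finset.filter_not]



set_option linter.unusedSectionVars false
variable {ι : Type*} [Fintype ι] [DecidableEq ι] {pw : ι → ℝ}

lemma pOmega_factor (ω : ι → Bool) (i : ι) :
    pOmega pw ω = (if ω i then 1 - pw i else pw i)
      * ∏ j ∈ Finset.univ.erase i, (if ω j then 1 - pw j else pw j) :=
  (Finset.mul_prod_erase _ _ (Finset.mem_univ i)).symm

lemma pOmega_update (ω : ι → Bool) (i : ι) (b : Bool) :
    pOmega pw (Function.update ω i b) = (if b then 1 - pw i else pw i)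
      * ∏ j ∈ Finset.univ.erase i, (if ω j then 1 - pw j else pw j) := by
  rw [pOmega_factor _ i]
  simp only [Function.update_self]
  congr 1
  refine Finset.prod_congr rfl fun j hj => ?_
  rw [Function.update_of_ne (Finset.ne_of_mem_erase hj)]

lemma probOf_filter_split (q p : (ι → Bool) → Prop) [DecidablePred q] [DecidablePred p] :
    probOf pw (Finset.univ.filter q)
      = probOf pw (Finset.univ.filter fun ω => q ω ∧ p ω)
        + probOf pw (Finset.univ.filter fun ω => q ω ∧ ¬ p ω) := by
  unfold probOf
  rw [← Finset.filter_filter, ← Finset.filter_filter, Finset.sum_filter_add_sum_filter_not]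

lemma probOf_filter_not (q : (ι → Bool) → Prop) [DecidablePred q] :
    probOf pw (Finset.univ.filter fun ω => ¬ q ω) = 1 - probOf pw (Finset.univ.filter q) := by
  have h := Finset.sum_filter_add_sum_filter_not Finset.univ q (pOmega pw)
  have hu : probOf pw (Finset.univ : Finset (ι → Bool)) = 1 := probOf_univ
  unfold probOf at *
  linarith

lemma probOf_filter_and_false (i : ι) (q : (ι → Bool) → Prop) [DecidablePred q]
    (hq : ∀ ω b, q (Function.update ω i b) ↔ q ω) :
    probOf pw (Finset.univ.filter fun ω => q ω ∧ ω i = false)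
      = pw i * probOf pw (Finset.univ.filter q) := by
  have hsplit := probOf_filter_split (pw := pw) q (fun ω => ω i = false)
  have hcongr : (Finset.univ.filter fun ω => q ω ∧ ¬ ω i = false)
      = Finset.univ.filter fun ω => q ω ∧ ω i = true := by
    refine Finset.filter_congr fun ω _ => ?_
    simp
  rw [hcongr] at hsplit
  have hflip : pw i * probOf pw (Finset.univ.filter fun ω => q ω ∧ ω i = true)
      = (1 - pw i) * probOf pw (Finset.univ.filter fun ω => q ω ∧ ω i = false) := by
    unfold probOf
    rw [Finset.mul_sum, Finset.mul_sum]
    refine Finset.sum_nbij' (i := fun ω => Function.update ω i false)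
      (j := fun ω => Function.update ω i true) ?_ ?_ ?_ ?_ ?_
    · intro ω hω
      rw [Finset.mem_filter] at hω ⊢
      exact ⟨Finset.mem_univ _, (hq ω false).2 hω.2.1, Function.update_self _ _ _⟩
    · intro ω hω
      rw [Finset.mem_filter] at hω ⊢
      exact ⟨Finset.mem_univ _, (hq ω true).2 hω.2.1, Function.update_self _ _ _⟩
    · intro ω hω
      rw [Finset.mem_filter] at hω
      funext j
      by_cases h : j = i
      · subst h; simp [hω.2.2]
      · simp [Function.update_of_ne h]
    · intro ω hω
      rw [Finset.mem_filter] at hω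
      funext j
      by_cases h : j = i
      · subst h; simp [hω.2.2]
      · simp [Function.update_of_ne h]
    · intro ω hω
      rw [Finset.mem_filter] at hω
      rw [pOmega_update, pOmega_factor (pw := pw) ω i, hω.2.2]
      simp only [Bool.false_eq_true, if_false, if_true]
      ring
  have h1 : pw i * probOf pw (Finset.univ.filter q)
      = pw i * probOf pw (Finset.univ.filter fun ω => q ω ∧ ω i = false)
        + pw i * probOf pw (Finset.univ.filter fun ω => q ω ∧ ω i = true) := by
    rw [hsplit]; ring
  rw [h1, hflip]
  ring

open Strategy

-- membership of i in performed is independent of coordinate i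
lemma mem_performed_update (T : Strategy ι) (ω : ι → Bool) (i : ι) (b : Bool) :
    i ∈ T.performed (Function.update ω i b) ↔ i ∈ T.performed ω := by
  induction T with
  | leaf => simp [performed]
  | node j t0 t1 ih0 ih1 =>
    by_cases h : j = i
    · subst h; simp [performed]
    · simp only [performed, Finset.mem_insert]
      rw [Function.update_of_ne h]
      by_cases hωj : ω j <;> simp [hωj, ih0, ih1]

lemma zeroSet_subset_performed (T : Strategy ι) (ω : ι → Bool) :
    T.zeroSet ω ⊆ T.performed ω := by
  induction T with
  | leaf => simp [zeroSet, performed]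
  | node j t0 t1 ih0 ih1 =>
    by_cases hωj : ω j <;> simp only [zeroSet, performed, hωj, if_true, if_false]
    · exact (ih1).trans (Finset.subset_insert _ _)
    · exact Finset.insert_subset_insert _ ih0

lemma not_mem_performed_of_used {T : Strategy ι} {used : Finset ι}
    (h : T.noRepeatFrom used) {i : ι} (hi : i ∈ used) (ω : ι → Bool) :
    i ∉ T.performed ω := by
  induction T generalizing used with
  | leaf => simp [performed]
  | node j t0 t1 ih0 ih1 =>
    obtain ⟨hj, h0, h1⟩ := h
    simp only [performed, Finset.mem_insert]
    push_neg
    constructor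
    · rintro rfl; exact hj hi
    · by_cases hωj : ω j <;> simp only [hωj, if_true, if_false]
      · exact ih1 h1 (Finset.mem_insert_of_mem hi)
      · exact ih0 h0 (Finset.mem_insert_of_mem hi)

lemma mem_zeroSet_iff {T : Strategy ι} {used : Finset ι} (h : T.noRepeatFrom used)
    (ω : ι → Bool) (i : ι) :
    i ∈ T.zeroSet ω ↔ i ∈ T.performed ω ∧ ω i = false := by
  induction T generalizing used with
  | leaf => simp [zeroSet, performed]
  | node j t0 t1 ih0 ih1 =>
    obtain ⟨hj, h0, h1⟩ := h
    by_cases hωj : ω j <;>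
      simp only [zeroSet, performed, hωj, Bool.false_eq_true, if_true, if_false, Finset.mem_insert]
    · by_cases hij : i = j
      · subst hij
        have hnp := not_mem_performed_of_used h1 (Finset.mem_insert_self i used) ω
        have hnz : i ∉ t1.zeroSet ω := fun hz => hnp (zeroSet_subset_performed t1 ω hz)
        simp [hnz, hωj]
      · rw [ih1 h1]; simp [hij]
    · by_cases hij : i = j
      · subst hij; simp [hωj]
      · simp only [hij, false_or]
        rw [ih0 h0]

/-- Contract all nodes labeled `j` to their right subtree. -/
def contract (j : ι) : Strategy ι → Strategy ι
  | .leaf => .leaf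
  | .node i t0 t1 => if i = j then contract j t1 else .node i (contract j t0) (contract j t1)

lemma zeroSet_contract (j : ι) (T : Strategy ι) (ω : ι → Bool) (h : ω j = true) :
    (contract j T).zeroSet ω = T.zeroSet ω := by
  induction T with
  | leaf => rfl
  | node i t0 t1 ih0 ih1 =>
    by_cases hij : i = j
    · subst hij; simp only [contract, if_true, zeroSet, h, ih1]
    · simp only [contract, if_neg hij, zeroSet]
      by_cases hωi : ω i <;> simp [hωi, ih0, ih1]

lemma performed_contract (j : ι) (T : Strategy ι) (ω : ι → Bool) (h : ω j = true) :
    (contract j T).performed ω = (T.performed ω).erase j := by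
  induction T with
  | leaf => simp [contract, performed]
  | node i t0 t1 ih0 ih1 =>
    by_cases hij : i = j
    · subst hij
      simp only [contract, if_true, performed, h, if_true, ih1]
      ext k; by_cases hk : k = i <;> simp [hk]
    · simp only [contract, if_neg hij, performed]
      by_cases hωi : ω i <;> simp only [hωi, Bool.false_eq_true, if_true, if_false, ih0, ih1] <;>
        · ext k
          by_cases hk : k = j <;> by_cases hk' : k = i <;> simp [hk, hk', hij, Ne.symm hij]

lemma noRepeatFrom_anti (T : Strategy ι) {u v : Finset ι} (huv : u ⊆ v)
    (h : T.noRepeatFrom v) : T.noRepeatFrom u := by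
  induction T generalizing u v with
  | leaf => trivial
  | node i t0 t1 ih0 ih1 =>
    obtain ⟨hi, h0, h1⟩ := h
    exact ⟨fun hu => hi (huv hu), ih0 (Finset.insert_subset_insert _ huv) h0,
      ih1 (Finset.insert_subset_insert _ huv) h1⟩

lemma noRepeatFrom_contract (j : ι) (T : Strategy ι) (used : Finset ι)
    (h : T.noRepeatFrom used) : (contract j T).noRepeatFrom (insert j used) := by
  induction T generalizing used with
  | leaf => trivial
  | node i t0 t1 ih0 ih1 =>
    obtain ⟨hi, h0, h1⟩ := h
    by_cases hij : i = j
    · subst hij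
      simp only [contract, if_true]
      have := ih1 _ h1
      rwa [Finset.insert_idem] at this
    · simp only [contract, if_neg hij]
      refine ⟨?_, ?_, ?_⟩
      · simp only [Finset.mem_insert]
        push_neg
        exact ⟨hij, hi⟩
      · have := ih0 _ h0; rwa [Finset.insert_comm] at this
      · have := ih1 _ h1; rwa [Finset.insert_comm] at this

def depth : Strategy ι → ℕ
  | .leaf => 0
  | .node _ t0 t1 => max (depth t0) (depth t1) + 1

lemma depth_le_of_noRepeatFrom (T : Strategy ι) (used : Finset ι)
    (h : T.noRepeatFrom used) : depth T ≤ usedᶜ.card := by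
  induction T generalizing used with
  | leaf => exact Nat.zero_le _
  | node i t0 t1 ih0 ih1 =>
    obtain ⟨hi, h0, h1⟩ := h
    have hic : i ∈ usedᶜ := Finset.mem_compl.2 hi
    have hcard : ((insert i used)ᶜ).card + 1 = usedᶜ.card := by
      rw [Finset.compl_insert, Finset.card_erase_of_mem hic]
      have : 1 ≤ usedᶜ.card := Finset.card_pos.2 ⟨i, hic⟩
      omega
    have := ih0 _ h0
    have := ih1 _ h1
    simp only [depth]
    omega

lemma finite_depth_le (n : ℕ) : {T : Strategy ι | depth T ≤ n}.Finite := by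
  induction n with
  | zero =>
    refine Set.Finite.subset (Set.finite_singleton Strategy.leaf) ?_
    rintro (_ | ⟨i, t0, t1⟩) h
    · exact rfl
    · simp [depth] at h
  | succ n ih =>
    refine Set.Finite.subset (Set.Finite.union (Set.finite_singleton Strategy.leaf)
      (Set.Finite.image (fun p : ι × Strategy ι × Strategy ι => Strategy.node p.1 p.2.1 p.2.2)
        ((Set.finite_univ (α := ι)).prod (ih.prod ih)))) ?_
    rintro (_ | ⟨i, t0, t1⟩) h
    · exact Or.inl rfl
    · simp only [depth, Set.mem_setOf_eq, Nat.add_le_add_iff_right, Nat.max_le] at h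
      exact Or.inr ⟨⟨i, t0, t1⟩, ⟨trivial, h.1, h.2⟩, rfl⟩

def chain : List ι → Strategy ι
  | [] => .leaf
  | i :: l => .node i (chain l) (chain l)

lemma chain_noRepeatFrom (l : List ι) (used : Finset ι) (hn : l.Nodup)
    (hd : ∀ i ∈ l, i ∉ used) : (chain l).noRepeatFrom used := by
  induction l generalizing used with
  | nil => trivial
  | cons i l ih =>
    obtain ⟨hi, hn⟩ := List.nodup_cons.1 hn
    have h' : ∀ j ∈ l, j ∉ insert i used := by
      intro j hj
      simp only [Finset.mem_insert]
      push_neg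
      exact ⟨fun hji => hi (hji ▸ hj), hd j (List.mem_cons_of_mem _ hj)⟩
    exact ⟨hd i (List.mem_cons_self), ih _ hn h', ih _ hn h'⟩

lemma mem_zeroSet_chain (l : List ι) (ω : ι → Bool) (h : ∀ i ∈ l, ω i = false) :
    ∀ i ∈ l, i ∈ (chain l).zeroSet ω := by
  induction l with
  | nil => intro i hi; cases hi
  | cons j l ih =>
    have hωj : ω j = false := h j (List.mem_cons_self)
    intro i hi
    simp only [chain, zeroSet, hωj, Bool.false_eq_true, if_false, Finset.mem_insert]
    rcases List.mem_cons.1 hi with rfl | hi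
    · exact Or.inl rfl
    · exact Or.inr (ih (fun k hk => h k (List.mem_cons_of_mem _ hk)) i hi)

set_option maxHeartbeats 1000000 in
lemma key (pw cst : ι → ℝ) (hpw0 : ∀ i, 0 < pw i) (hpw1 : ∀ i, pw i ≤ 1)
    (hcst : ∀ i, 0 ≤ cst i) (a1 : ι)
    (Cov : Finset ι → Prop) [DecidablePred Cov]
    (hCova1 : ∀ Z : Finset ι, a1 ∈ Z → Cov Z)
    (hr : ∀ Z : Finset ι, Cov Z → cst a1 / pw a1 ≤ ∑ i ∈ Z, cst i / pw i)
    (T : Strategy ι) (hnr : T.noRepeat)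
    (hne : probOf pw (Finset.univ.filter fun ω => ¬ Cov (T.zeroSet ω)) = 0) :
    (Strategy.node a1 Strategy.leaf (contract a1 T)).noRepeat ∧
    probOf pw (Finset.univ.filter fun ω =>
      ¬ Cov ((Strategy.node a1 Strategy.leaf (contract a1 T)).zeroSet ω)) = 0 ∧
    testCost pw cst (Strategy.node a1 Strategy.leaf (contract a1 T)) ≤ testCost pw cst T := by
  have hpw0' : ∀ i, pw i ≠ 0 := fun i => ne_of_gt (hpw0 i)
  have hpwle : ∀ i, 0 ≤ pw i := fun i => le_of_lt (hpw0 i)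
  have hzero : ∀ ω : ι → Bool, ¬ Cov (T.zeroSet ω) → pOmega pw ω = 0 := by
    intro ω hω
    have := (Finset.sum_eq_zero_iff_of_nonneg
      (fun ω _ => pOmega_nonneg hpwle hpw1 ω)).1 hne ω
    exact this (Finset.mem_filter.2 ⟨Finset.mem_univ _, hω⟩)
  refine ⟨⟨Finset.notMem_empty a1, trivial, noRepeatFrom_contract a1 T ∅ hnr⟩, ?_, ?_⟩
  · -- no-error of the new strategy
    refine le_antisymm ?_ (probOf_nonneg hpwle hpw1 _)
    rw [← hne]
    refine Finset.sum_le_sum_of_subset_of_nonneg ?_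
      (fun ω _ _ => pOmega_nonneg hpwle hpw1 ω)
    intro ω hω
    rw [Finset.mem_filter] at hω ⊢
    refine ⟨Finset.mem_univ _, ?_⟩
    rcases hω with ⟨-, hω⟩
    by_cases ha : ω a1 = true
    · simp only [Strategy.zeroSet, ha, if_true, zeroSet_contract a1 T ω ha] at hω
      exact hω
    · exfalso
      simp only [Strategy.zeroSet, ha, if_false, Bool.false_eq_true] at hω
      exact hω (hCova1 _ (Finset.mem_insert_self _ _))
  · -- cost comparison
    -- Key inequality
    have KI : cst a1 * (1 - probOf pw (Finset.univ.filter fun ω => a1 ∈ T.performed ω))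
        ≤ ∑ i ∈ Finset.univ.erase a1,
            cst i * probOf pw (Finset.univ.filter fun ω =>
              i ∈ T.performed ω ∧ ω a1 = false) := by
      -- rewrite each summand via the zero set
      have hsummand : ∀ i ∈ Finset.univ.erase a1,
          cst i * probOf pw (Finset.univ.filter fun ω => i ∈ T.performed ω ∧ ω a1 = false)
          = (cst i / pw i) * probOf pw (Finset.univ.filter fun ω =>
              i ∈ T.zeroSet ω ∧ ω a1 = false) := by
        intro i hi
        have hia1 : i ≠ a1 := Finset.ne_of_mem_erase hi
        have hind := probOf_filter_and_false (pw := pw) i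
          (fun ω => i ∈ T.performed ω ∧ ω a1 = false) (by
            intro ω b
            simp only [mem_performed_update, Function.update_of_ne (Ne.symm hia1)])
        have hcongr : (Finset.univ.filter fun ω =>
              (i ∈ T.performed ω ∧ ω a1 = false) ∧ ω i = false)
            = Finset.univ.filter fun ω => i ∈ T.zeroSet ω ∧ ω a1 = false := by
          refine Finset.filter_congr fun ω _ => ?_
          rw [mem_zeroSet_iff hnr]
          tauto
        rw [← hcongr, hind, ← mul_assoc, div_mul_cancel₀ _ (hpw0' i)]
      rw [Finset.sum_congr rfl hsummand]
      -- turn into a double sum and swap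
      have hswap : ∑ i ∈ Finset.univ.erase a1,
          (cst i / pw i) * probOf pw (Finset.univ.filter fun ω =>
            i ∈ T.zeroSet ω ∧ ω a1 = false)
          = ∑ ω : ι → Bool, ∑ i ∈ Finset.univ.erase a1,
              (if i ∈ T.zeroSet ω ∧ ω a1 = false then (cst i / pw i) * pOmega pw ω else 0) := by
        rw [Finset.sum_comm]
        refine Finset.sum_congr rfl fun i _ => ?_
        unfold probOf
        rw [Finset.mul_sum, Finset.sum_filter]
      rw [hswap]
      have hlower : ∑ ω : ι → Bool,
          (if a1 ∉ T.zeroSet ω ∧ ω a1 = false then (cst a1 / pw a1) * pOmega pw ω else 0)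
          ≤ ∑ ω : ι → Bool, ∑ i ∈ Finset.univ.erase a1,
              (if i ∈ T.zeroSet ω ∧ ω a1 = false then (cst i / pw i) * pOmega pw ω else 0) := by
        refine Finset.sum_le_sum fun ω _ => ?_
        have hterm_nonneg : (0:ℝ) ≤ ∑ i ∈ Finset.univ.erase a1,
            (if i ∈ T.zeroSet ω ∧ ω a1 = false then (cst i / pw i) * pOmega pw ω else 0) := by
          refine Finset.sum_nonneg fun i _ => ?_
          split
          · exact mul_nonneg (div_nonneg (hcst i) (hpwle i)) (pOmega_nonneg hpwle hpw1 ω)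
          · exact le_rfl
        by_cases hA : a1 ∉ T.zeroSet ω ∧ ω a1 = false
        · rw [if_pos hA]
          by_cases h0 : pOmega pw ω = 0
          · refine le_trans (le_of_eq ?_) hterm_nonneg
            rw [h0, mul_zero]
          · have hCov : Cov (T.zeroSet ω) := by
              by_contra hC
              exact h0 (hzero ω hC)
            have hstep : ∑ i ∈ Finset.univ.erase a1,
                (if i ∈ T.zeroSet ω ∧ ω a1 = false then (cst i / pw i) * pOmega pw ω else 0)
                = ∑ i ∈ T.zeroSet ω, (cst i / pw i) * pOmega pw ω := by
              rw [← Finset.sum_filter]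
              refine Finset.sum_congr ?_ fun _ _ => rfl
              have h1 := hA.1
              have h2 := hA.2
              ext k
              simp only [Finset.mem_filter, Finset.mem_erase, Finset.mem_univ, and_true,
                true_and]
              constructor
              · tauto
              · intro hk
                refine ⟨?_, hk, h2⟩
                rintro rfl; exact h1 hk
            rw [hstep, ← Finset.sum_mul]
            exact mul_le_mul_of_nonneg_right (hr _ hCov) (pOmega_nonneg hpwle hpw1 ω)
        · rw [if_neg hA]
          exact hterm_nonneg
      refine le_trans ?_ hlower
      -- compute the lower bound sum
      have hsum : ∑ ω : ι → Bool,
          (if a1 ∉ T.zeroSet ω ∧ ω a1 = false then (cst a1 / pw a1) * pOmega pw ω else 0)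
          = (cst a1 / pw a1) * probOf pw (Finset.univ.filter fun ω =>
              a1 ∉ T.zeroSet ω ∧ ω a1 = false) := by
        unfold probOf
        rw [Finset.mul_sum, Finset.sum_filter]
      rw [hsum]
      have hcongr2 : (Finset.univ.filter fun ω => a1 ∉ T.zeroSet ω ∧ ω a1 = false)
          = Finset.univ.filter fun ω => (a1 ∉ T.performed ω) ∧ ω a1 = false := by
        refine Finset.filter_congr fun ω _ => ?_
        rw [mem_zeroSet_iff hnr]
        constructor
        · rintro ⟨h1, h2⟩; exact ⟨fun hp => h1 ⟨hp, h2⟩, h2⟩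
        · rintro ⟨h1, h2⟩; exact ⟨fun ⟨hp, _⟩ => h1 hp, h2⟩
      rw [hcongr2]
      have hind2 := probOf_filter_and_false (pw := pw) a1
        (fun ω => a1 ∉ T.performed ω) (by
          intro ω b
          simp only [mem_performed_update])
      rw [hind2]
      have hnot := probOf_filter_not (pw := pw) (fun ω => a1 ∈ T.performed ω)
      rw [hnot]
      refine le_of_eq ?_
      field_simp
      rw [mul_div_assoc, div_self (hpw0' a1), mul_one]
    have hT'cost : testCost pw cst (Strategy.node a1 Strategy.leaf (contract a1 T))
        = cst a1 + ∑ i ∈ Finset.univ.erase a1,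
            cst i * probOf pw (Finset.univ.filter fun ω =>
              i ∈ T.performed ω ∧ ω a1 = true) := by
      unfold testCost
      rw [← Finset.add_sum_erase _ _ (Finset.mem_univ a1)]
      congr 1
      · have huniv : (Finset.univ.filter fun ω =>
            a1 ∈ (Strategy.node a1 Strategy.leaf (contract a1 T)).performed ω)
            = Finset.univ := by
          refine Finset.filter_true_of_mem fun ω _ => ?_
          simp [Strategy.performed]
        rw [huniv, probOf_univ, mul_one]
      · refine Finset.sum_congr rfl fun i hi => ?_
        have hia1 : i ≠ a1 := Finset.ne_of_mem_erase hi
        refine congrArg (fun E => cst i * probOf pw E) (Finset.filter_congr fun ω _ => ?_)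
        by_cases hω : ω a1 = true
        · simp only [Strategy.performed, hω, if_true, Finset.mem_insert,
            performed_contract a1 T ω hω, Finset.mem_erase]
          simp [hia1, hω]
        · simp only [Strategy.performed, hω, Finset.mem_insert]
          simp [hia1, hω, Strategy.performed]
    have hTcost : testCost pw cst T
        = cst a1 * probOf pw (Finset.univ.filter fun ω => a1 ∈ T.performed ω)
          + ∑ i ∈ Finset.univ.erase a1,
              (cst i * probOf pw (Finset.univ.filter fun ω =>
                  i ∈ T.performed ω ∧ ω a1 = true)
               + cst i * probOf pw (Finset.univ.filter fun ω =>
                  i ∈ T.performed ω ∧ ω a1 = false)) := by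
      unfold testCost
      rw [← Finset.add_sum_erase _ _ (Finset.mem_univ a1)]
      congr 1
      refine Finset.sum_congr rfl fun i hi => ?_
      rw [← mul_add]
      congr 1
      have hsplit := probOf_filter_split (pw := pw) (fun ω => i ∈ T.performed ω)
        (fun ω => ω a1 = true)
      have hcongr : (Finset.univ.filter fun ω => i ∈ T.performed ω ∧ ¬ ω a1 = true)
          = Finset.univ.filter fun ω => i ∈ T.performed ω ∧ ω a1 = false := by
        refine Finset.filter_congr fun ω _ => ?_
        simp
      rw [hcongr] at hsplit
      exact hsplit
    rw [hT'cost, hTcost, Finset.sum_add_distrib]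
    linarith [KI]

end CFaux

/-- **Coarsest-first (CF) property under the covering-ratio condition (Theorem 3).**
In the augmented hierarchy (original tests of cost `c A > 0` and power `β A ∈ (0,1]`,
plus perfect singleton tests of cost `c* > 0` and power `1`, all mutually independent
under the background measure), suppose the cost-to-power ratio of the coarsest attribute
`A₁ = 𝒴` is at most the infimum, over all coverings `Z` of the augmented hierarchy, of
`Σ_{A ∈ Z} c(A)/β(A)`.  Then there exists a strategy of minimal expected cost among all
no-error strategies whose first performed test is `X_{A₁}`. -/

theorem coarsest_first_of_covering_ratio {Y : Type*} [Fintype Y] [DecidableEq Y]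
    (H : Hierarchy Y) (β c : Finset Y → ℝ)
    (hβ : ∀ A ∈ H.attrs, 0 < β A ∧ β A ≤ 1) (hc : ∀ A ∈ H.attrs, 0 < c A)
    (cstar : ℝ) (hcstar : 0 < cstar)
    (hratio : ∀ Z : Finset (AugIdx H), IsCovering H Z →
        c Finset.univ / β Finset.univ ≤ ∑ i ∈ Z, augCost H c cstar i / augPow H β i) :
    ∃ t0 t1 : Strategy (AugIdx H),
      (Strategy.node (Sum.inl ⟨Finset.univ, H.univ_mem⟩) t0 t1).noRepeat
      ∧ NoError H β (Strategy.node (Sum.inl ⟨Finset.univ, H.univ_mem⟩) t0 t1)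
      ∧ ∀ T' : Strategy (AugIdx H), T'.noRepeat → NoError H β T' →
          testCost (augPow H β) (augCost H c cstar)
              (Strategy.node (Sum.inl ⟨Finset.univ, H.univ_mem⟩) t0 t1)
            ≤ testCost (augPow H β) (augCost H c cstar) T' := by
  classical
  set a1 : AugIdx H := Sum.inl ⟨Finset.univ, H.univ_mem⟩ with ha1
  have hpw0 : ∀ i, 0 < augPow H β i := by
    rintro (⟨A, hA⟩ | y)
    · exact (hβ A hA).1
    · exact one_pos
  have hpw1 : ∀ i, augPow H β i ≤ 1 := by
    rintro (⟨A, hA⟩ | y)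
    · exact (hβ A hA).2
    · exact le_refl 1
  have hcst : ∀ i, 0 ≤ augCost H c cstar i := by
    rintro (⟨A, hA⟩ | y)
    · exact le_of_lt (hc A hA)
    · exact le_of_lt hcstar
  -- the admissible strategies form a finite nonempty family
  have hfin : {T : Strategy (AugIdx H) | T.noRepeat ∧ NoError H β T}.Finite := by
    refine (CFaux.finite_depth_le (Fintype.card (AugIdx H))).subset ?_
    rintro T ⟨h1, -⟩
    have h := CFaux.depth_le_of_noRepeatFrom T ∅ h1
    simpa using h
  have hnonempty : {T : Strategy (AugIdx H) | T.noRepeat ∧ NoError H β T}.Nonempty := by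
    refine ⟨CFaux.chain ((Finset.univ.toList (α := Y)).map Sum.inr), ?_, ?_⟩
    · exact CFaux.chain_noRepeatFrom _ _
        ((Finset.nodup_toList _).map Sum.inr_injective)
        (fun i _ => Finset.notMem_empty i)
    · unfold NoError
      refine Finset.sum_eq_zero fun ω hω => ?_
      rw [Finset.mem_filter] at hω
      by_cases hall : ∀ y : Y, ω (Sum.inr y) = false
      · exfalso
        apply hω.2
        refine Finset.eq_univ_iff_forall.2 fun y => ?_
        have hmem : (Sum.inr y : AugIdx H)
            ∈ (CFaux.chain ((Finset.univ.toList (α := Y)).map Sum.inr)).zeroSet ω := by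
          refine CFaux.mem_zeroSet_chain _ ω ?_ _ ?_
          · intro i hi
            obtain ⟨z, -, rfl⟩ := List.mem_map.1 hi
            exact hall z
          · exact List.mem_map_of_mem (Finset.mem_toList.2 (Finset.mem_univ y))
        have hle := Finset.le_sup (f := augSet H) hmem
        exact hle (Finset.mem_singleton_self y)
      · push_neg at hall
        obtain ⟨y, hy⟩ := hall
        have hy' : ω (Sum.inr y) = true := by
          revert hy; cases ω (Sum.inr y) <;> simp
        refine Finset.prod_eq_zero (Finset.mem_univ (Sum.inr y)) ?_
        rw [hy', if_pos rfl]
        show 1 - augPow H β (Sum.inr y) = 0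
        simp [augPow]
  obtain ⟨Tm, hTm, hmin⟩ := Set.exists_min_image _
    (testCost (augPow H β) (augCost H c cstar)) hfin hnonempty
  have hCova1 : ∀ Z : Finset (AugIdx H), a1 ∈ Z → IsCovering H Z := by
    intro Z hZ
    refine le_antisymm (Finset.subset_univ _) ?_
    have hle := Finset.le_sup (f := augSet H) hZ
    exact le_trans (le_of_eq rfl) hle
  obtain ⟨hnr', hne', hle'⟩ := CFaux.key (augPow H β) (augCost H c cstar)
    hpw0 hpw1 hcst a1 (IsCovering H) hCova1 (fun Z hZ => hratio Z hZ) Tm hTm.1 hTm.2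
  exact ⟨Strategy.leaf, CFaux.contract a1 Tm, hnr', hne',
    fun T'' h1 h2 => le_trans hle' (hmin T'' ⟨h1, h2⟩)⟩
end
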